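/- Let l be an odd prime, K a non-Galois number field of degree l with Galois closure L satisfying Gal(L/Q) ≅ D_l. If p is a rational prime whose ramification index in L/Q is divisible by l, then p is totally ramified in K/Q. -/

import Mathlib

/-!
Since `[L : K] = 2`, a prime `P` of `L` above a prime `β` of `K` above `p` has
`e(P | β) ≤ 2 < l`. By multiplicativity of ramification indices,
`l ∣ e(P | p) = e(β | p) · e(P | β)` forces `l ∣ e(β | p)`, so `e(β | p) ≥ l = [K : ℚ]`.
The fundamental identity `∑ e f = [K : ℚ]` then leaves room for no prime of `K` above `p`
other than `β`, and `p 𝓞_K = β ^ l`.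
-/

open NumberField

namespace Ideal

open Module

variable {R S : Type*} [CommRing R] [IsDomain R] [CommRing S] [Algebra R S]
  [Module.Finite R S] [Module.Flat R S]

theorem ramificationIdx_mul_inertiaDeg_le_finrank (q : Ideal S) [q.IsPrime] :
    q.ramificationIdx R * q.inertiaDeg R ≤ finrank R S := by
  let p := q.under R
  have := (Algebra.QuasiFinite.finite_primesOver (S := S) p).fintype
  rw [← sum_ramification_inertia_eq_finrank p S]
  exact Finset.single_le_sum
    (f := fun Q : p.primesOver S ↦ Q.1.ramificationIdx R * Q.1.inertiaDeg R) (fun _ _ ↦ Nat.zero_le _)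
    (Finset.mem_univ ⟨q, ‹_›, ⟨rfl⟩⟩)

theorem eq_of_liesOver_of_finrank_le_ramificationIdx (p : Ideal R) [p.IsPrime]
    {β q : Ideal S} [β.IsPrime] [β.LiesOver p] [q.IsPrime] [q.LiesOver p]
    (h : finrank R S ≤ β.ramificationIdx R) : q = β := by
  by_contra hne
  have := (Algebra.QuasiFinite.finite_primesOver (S := S) p).fintype
  let β' : p.primesOver S := ⟨β, ‹_›, ‹_›⟩
  let q' : p.primesOver S := ⟨q, ‹_›, ‹_›⟩
  have hne' : q' ≠ β' := fun h ↦ hne (congrArg Subtype.val h)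
  have hsum := sum_ramification_inertia_eq_finrank p S
  rw [← Finset.add_sum_erase _ _ (Finset.mem_univ β'),
    ← Finset.add_sum_erase _ _ (Finset.mem_erase.mpr ⟨hne', Finset.mem_univ q'⟩)] at hsum
  have hβ := Nat.le_mul_of_pos_right (β.ramificationIdx R) (β.inertiaDeg_pos R)
  have hq := Nat.mul_pos (q.ramificationIdx_pos R) (q.inertiaDeg_pos R)
  simp only [β', q'] at hsum
  omega

theorem map_eq_pow_finrank_of_finrank_le_ramificationIdx [IsDedekindDomain S]
    {p : Ideal R} [p.IsMaximal] (hp : p ≠ ⊥) (β : Ideal S) [β.IsPrime] [β.LiesOver p]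
    (h : finrank R S ≤ β.ramificationIdx R) :
    p.map (algebraMap R S) = β ^ finrank R S := by
  have hprimes : (p.primesOver S).toFinset = {β} := by
    ext q
    simp only [Set.mem_toFinset, Finset.mem_singleton]
    constructor
    · rintro ⟨_, _⟩
      exact eq_of_liesOver_of_finrank_le_ramificationIdx p h
    · rintro rfl
      exact ⟨‹_›, ‹_›⟩
  have he : β.ramificationIdx R = finrank R S :=
    ((Nat.le_mul_of_pos_right _ (β.inertiaDeg_pos R)).trans
      (β.ramificationIdx_mul_inertiaDeg_le_finrank)).antisymm h
  rw [map_algebraMap_eq_finsetProd_pow hp, hprimes, Finset.prod_singleton, he]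

end Ideal

theorem totally_ramified_in_K_of_l_dvd_ramification_general
    (l : ℕ) (hl : l.Prime) (hodd : Odd l)
    (K L : Type*) [Field K] [NumberField K] [Field L] [NumberField L]
    [Algebra K L] [IsScalarTower ℚ K L]
    (hK : Module.finrank ℚ K = l)
    (hL : Module.finrank ℚ L = 2 * l)
    (p : ℕ) (hp : p.Prime)
    (hram : ∀ P : Ideal (𝓞 L), P.IsPrime →
      Ideal.comap (algebraMap ℤ (𝓞 L)) P = Ideal.span {(p : ℤ)} →
      l ∣ Ideal.ramificationIdx' (Ideal.span {(p : ℤ)}) P) :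
    ∃ β : Ideal (𝓞 K), β.IsPrime ∧
      Ideal.map (algebraMap ℤ (𝓞 K)) (Ideal.span {(p : ℤ)}) = β ^ l := by
  have : Fact p.Prime := ⟨hp⟩
  set pZ : Ideal ℤ := Ideal.span {(p : ℤ)}
  have hpZ : pZ ≠ ⊥ := by simpa [pZ] using hp.ne_zero
  have hrankK : Module.finrank ℤ (𝓞 K) = l := (RingOfIntegers.rank K).trans hK
  have hrankKL : Module.finrank (𝓞 K) (𝓞 L) = 2 := by
    rw [← IsFractionRing.finrank_eq (𝓞 K) K (𝓞 L) L]
    have := Module.finrank_mul_finrank ℚ K L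
    rw [hK, hL, mul_comm] at this
    exact Nat.eq_of_mul_eq_mul_right hl.pos this
  obtain ⟨⟨β, _, _⟩⟩ := pZ.nonempty_primesOver (S := 𝓞 K)
  obtain ⟨⟨P, _, _⟩⟩ := β.nonempty_primesOver (S := 𝓞 L)
  have : P.LiesOver pZ := .trans P β pZ
  have hβ : l ∣ β.ramificationIdx ℤ := by
    have hP := hram P ‹_› (P.over_def pZ).symm
    rw [Ideal.ramificationIdx'_eq_ramificationIdx pZ P hpZ, Ideal.ramificationIdx_tower β P] at hP
    refine (hl.dvd_mul.mp hP).resolve_right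
      (Nat.not_dvd_of_pos_of_lt (P.ramificationIdx_pos _) ?_)
    have hle := (Nat.le_mul_of_pos_right _ (P.inertiaDeg_pos (𝓞 K))).trans
      P.ramificationIdx_mul_inertiaDeg_le_finrank
    obtain ⟨k, rfl⟩ := hodd
    have := hl.two_le
    omega
  refine ⟨β, ‹_›, hrankK ▸ Ideal.map_eq_pow_finrank_of_finrank_le_ramificationIdx hpZ β ?_⟩
  exact hrankK ▸ Nat.le_of_dvd (β.ramificationIdx_pos ℤ) hβ

/-- Let `l` be an odd prime and `K` a non-Galois number field of
degree `l` whose Galois closure `L` over `ℚ` has Galois group `D_l`. If a rational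
prime `p` has ramification index divisible by `l` in `L/ℚ`, then `p` is totally
ramified in `K/ℚ`, i.e. `p·O_K = β^l` for a prime ideal `β` of `O_K`. -/
theorem totally_ramified_in_K_of_l_dvd_ramification
    (l : ℕ) (hl : l.Prime) (hodd : Odd l)
    (K L : Type*) [Field K] [NumberField K] [Field L] [NumberField L]
    [Algebra K L] [IsScalarTower ℚ K L]
    (hK : Module.finrank ℚ K = l) (hKnotGal : ¬ IsGalois ℚ K)
    [IsGalois ℚ L] (hL : Module.finrank ℚ L = 2 * l)
    (hdihedral : Nonempty ((L ≃ₐ[ℚ] L) ≃* DihedralGroup l))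
    (p : ℕ) (hp : p.Prime)
    (hram : ∀ P : Ideal (𝓞 L), P.IsPrime →
      Ideal.comap (algebraMap ℤ (𝓞 L)) P = Ideal.span {(p : ℤ)} →
      l ∣ Ideal.ramificationIdx' (Ideal.span {(p : ℤ)}) P) :
    ∃ β : Ideal (𝓞 K), β.IsPrime ∧
      Ideal.map (algebraMap ℤ (𝓞 K)) (Ideal.span {(p : ℤ)}) = β ^ l :=
  totally_ramified_in_K_of_l_dvd_ramification_general l hl hodd K L hK hL p hp hram
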